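/- Every k-uniform hypergraph G with m(G) < d (for an integer d ≥ 1) admits a vertex k-colouring in which no colour class induces a subhypergraph of minimum degree at least d. In particular, if m(G) < δ_max(H) then G has a k-colouring of its vertices with no monochromatic copy of H. -/

import Mathlib

open Finset
open scoped Classical

/-- A hypergraph is given by its (finite) edge set; its vertex set is the
union of its edges. -/
abbrev HG := Finset (Finset ℕ)

namespace HG

/-- The vertex set of a hypergraph. -/
def vset (H : HG) : Finset ℕ := H.sup id

/-- Number of vertices. -/
def nV (H : HG) : ℕ := (vset H).card

/-- Number of edges. -/
def nE (H : HG) : ℕ := H.card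

/-- `H` is `k`-uniform. -/
def IsUniform (k : ℕ) (H : HG) : Prop := ∀ e ∈ H, e.card = k

/-- The density `e(H)/v(H)` (junk value `0` when `H` is empty). -/
noncomputable def dens (H : HG) : ℝ := (nE H : ℝ) / (nV H : ℝ)

/-- The maximum density `m(H) = max_{J ⊆ H} d(J)`. -/
noncomputable def maxDens (H : HG) : ℝ :=
  H.powerset.sup' ⟨∅, Finset.empty_mem_powerset H⟩ dens

/-- `d₁(H) = e(H)/(v(H)-1)` if `v(H) ≥ 2`, else `0`. -/
noncomputable def d1 (H : HG) : ℝ :=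
  if 2 ≤ nV H then (nE H : ℝ) / ((nV H : ℝ) - 1) else 0

/-- The arboricity (`1`-density) `ar(H) = m₁(H) = max_{J ⊆ H} d₁(J)`. -/
noncomputable def ar (H : HG) : ℝ :=
  H.powerset.sup' ⟨∅, Finset.empty_mem_powerset H⟩ d1

/-- `d_k(H) = (e(H)-1)/(v(H)-k)` for non-empty `H` with `v(H) ≥ k+1`,
`1/k` for a single `k`-edge, and `0` otherwise. -/
noncomputable def dK (k : ℕ) (H : HG) : ℝ :=
  if H.Nonempty ∧ k + 1 ≤ nV H then ((nE H : ℝ) - 1) / ((nV H : ℝ) - (k : ℝ))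
  else if nE H = 1 ∧ nV H = k then 1 / (k : ℝ)
  else 0

/-- The `k`-density `m_k(H) = max_{J ⊆ H} d_k(J)`. -/
noncomputable def mK (k : ℕ) (H : HG) : ℝ :=
  H.powerset.sup' ⟨∅, Finset.empty_mem_powerset H⟩ (dK k)

/-- The asymmetric density
`d_k(H₁,H₂) = e(H₁)/(v(H₁) - k + 1/m_k(H₂))` when `H₂` is non-empty and
`v(H₁) ≥ k`, else `0`. -/
noncomputable def dKK (k : ℕ) (H1 H2 : HG) : ℝ :=
  if H2.Nonempty ∧ k ≤ nV H1 then
    (nE H1 : ℝ) / ((nV H1 : ℝ) - (k : ℝ) + 1 / mK k H2)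
  else 0

/-- The asymmetric `k`-density `m_k(H₁,H₂) = max_{J ⊆ H₁} d_k(J,H₂)`. -/
noncomputable def mKK (k : ℕ) (H1 H2 : HG) : ℝ :=
  H1.powerset.sup' ⟨∅, Finset.empty_mem_powerset H1⟩ (fun J => dKK k J H2)

/-- `K` is a copy of `H` (image of `H` under an injection of its vertices). -/
def IsCopy (H K : HG) : Prop :=
  ∃ f : ℕ → ℕ, Set.InjOn f (vset H) ∧ K = H.image (fun e => e.image f)

/-- Degree of a vertex. -/
def deg (H : HG) (v : ℕ) : ℕ := (H.filter (fun e => v ∈ e)).card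

/-- Minimum degree `δ(H)` (junk value `0` for the empty hypergraph). -/
noncomputable def minDeg (H : HG) : ℕ :=
  if h : (vset H).Nonempty then (vset H).inf' h (deg H) else 0

/-- `δ_max(G) = max_{G' ⊆ G} δ(G')`. -/
noncomputable def maxMinDeg (G : HG) : ℕ := G.powerset.sup minDeg

/-- `H` is strictly `k`-balanced. -/
def StrictBal (k : ℕ) (H : HG) : Prop := ∀ J : HG, J ⊂ H → dK k J < mK k H

/-- `H₁` is strictly balanced with respect to `d_k(·, H₂)`. -/
def StrictBalWrt (k : ℕ) (H1 H2 : HG) : Prop :=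
  ∀ J : HG, J ⊂ H1 → dKK k J H2 < mKK k H1 H2

/-- `H` is connected. -/
def Conn (H : HG) : Prop :=
  ∀ u ∈ vset H, ∀ v ∈ vset H,
    Relation.ReflTransGen (fun a b => ∃ e ∈ H, a ∈ e ∧ b ∈ e) u v

end HG

open HG
lemma mem_vset {H : HG} {v : ℕ} : v ∈ vset H ↔ ∃ e ∈ H, v ∈ e := by
  simp [vset, Finset.mem_sup]

lemma vset_mono {H H' : HG} (h : H' ⊆ H) : vset H' ⊆ vset H := by
  intro v hv
  obtain ⟨e, he, hv⟩ := mem_vset.1 hv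
  exact mem_vset.2 ⟨e, h he, hv⟩

lemma maxDens_mono {G G' : HG} (h : G' ⊆ G) : maxDens G' ≤ maxDens G := by
  apply Finset.sup'_le
  intro J hJ
  exact Finset.le_sup' _ (Finset.mem_powerset.2 ((Finset.mem_powerset.1 hJ).trans h))

lemma dens_le_maxDens {G J : HG} (h : J ⊆ G) : dens J ≤ maxDens G :=
  Finset.le_sup' _ (Finset.mem_powerset.2 h)

lemma maxDens_nonneg (G : HG) : 0 ≤ maxDens G := by
  have := dens_le_maxDens (G := G) (J := ∅) (Finset.empty_subset G)
  have h0 : dens (∅ : HG) = 0 := by simp [HG.dens, HG.nE]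
  linarith

lemma sum_deg (k : ℕ) (G : HG) (hu : IsUniform k G) :
    ∑ v ∈ vset G, deg G v = k * G.card := by
  have h1 : ∀ v, deg G v = ∑ e ∈ G, if v ∈ e then 1 else 0 := by
    intro v; rw [deg, Finset.card_filter]
  calc ∑ v ∈ vset G, deg G v
      = ∑ v ∈ vset G, ∑ e ∈ G, if v ∈ e then 1 else 0 :=
        Finset.sum_congr rfl (fun v _ => h1 v)
    _ = ∑ e ∈ G, ∑ v ∈ vset G, if v ∈ e then 1 else 0 := Finset.sum_comm
    _ = ∑ e ∈ G, k := by
        refine Finset.sum_congr rfl (fun e he => ?_)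
        rw [← Finset.card_filter]
        have h2 : (vset G).filter (fun v => v ∈ e) = e := by
          ext v
          simp only [Finset.mem_filter, and_iff_right_iff_imp]
          intro hv; exact mem_vset.2 ⟨e, he, hv⟩
        rw [h2, hu e he]
    _ = k * G.card := by rw [Finset.sum_const, smul_eq_mul, Nat.mul_comm]
lemma edge_nonempty {k : ℕ} (hk : 2 ≤ k) {G : HG} (hu : IsUniform k G)
    {e : Finset ℕ} (he : e ∈ G) : e.Nonempty := by
  rw [← Finset.card_pos, hu e he]; omega

lemma exists_low_deg {k d : ℕ} (hk : 2 ≤ k) {G : HG} (hu : IsUniform k G)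
    (hne : G.Nonempty) (hm : maxDens G < (d : ℝ)) :
    ∃ v ∈ vset G, deg G v < k * d := by
  by_contra hcon
  push_neg at hcon
  obtain ⟨e, he⟩ := hne
  obtain ⟨v, hv⟩ := edge_nonempty hk hu he
  have hvG : v ∈ vset G := mem_vset.2 ⟨e, he, hv⟩
  have hvpos : 0 < nV G := Finset.card_pos.2 ⟨v, hvG⟩
  have hsum : k * d * nV G ≤ k * G.card := by
    rw [← sum_deg k G hu]
    calc k * d * nV G = ∑ _v ∈ vset G, k * d := by
          rw [Finset.sum_const, smul_eq_mul, HG.nV, Nat.mul_comm]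
      _ ≤ ∑ v ∈ vset G, deg G v := Finset.sum_le_sum (fun v hv => hcon v hv)
  have hdn : d * nV G ≤ nE G := by
    have h' : k * (d * nV G) ≤ k * nE G := by rw [← Nat.mul_assoc]; exact hsum
    exact Nat.le_of_mul_le_mul_left h' (by omega)
  have : (d : ℝ) ≤ dens G := by
    rw [HG.dens, le_div_iff₀ (by exact_mod_cast hvpos)]
    exact_mod_cast hdn
  have := dens_le_maxDens (Finset.Subset.refl G)
  linarith

lemma key_lemma (k d : ℕ) (hk : 2 ≤ k) (hd : 1 ≤ d) :
    ∀ n : ℕ, ∀ G : HG, G.card ≤ n → IsUniform k G → maxDens G < (d : ℝ) →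
    ∃ c : ℕ → Fin k, ∀ i : Fin k,
      maxMinDeg (G.filter (fun e => ∀ v ∈ e, c v = i)) < d := by
  intro n
  induction n with
  | zero =>
    intro G hcard _ _
    refine ⟨fun _ => ⟨0, by omega⟩, fun i => ?_⟩
    have hG : G = ∅ := Finset.card_eq_zero.1 (Nat.le_zero.1 hcard)
    subst hG
    simp [maxMinDeg, minDeg, vset]
    omega
  | succ n ih =>
    intro G hcard hu hm
    rcases Finset.eq_empty_or_nonempty G with rfl | hne
    · refine ⟨fun _ => ⟨0, by omega⟩, fun i => ?_⟩
      simp [maxMinDeg, minDeg, vset]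
      omega
    obtain ⟨v, hvG, hvdeg⟩ := exists_low_deg hk hu hne hm
    set G' : HG := G.filter (fun e => v ∉ e) with hG'
    have hG'sub : G' ⊆ G := Finset.filter_subset _ _
    have hG'card : G'.card ≤ n := by
      obtain ⟨e, he, hve⟩ := mem_vset.1 hvG
      have : G'.card < G.card := Finset.card_lt_card
        ⟨hG'sub, fun hsub => by
          have := hsub he
          simp [hG', Finset.mem_filter] at this
          exact this.2 hve⟩
      omega
    obtain ⟨c, hc⟩ := ih G' hG'card (fun e he => hu e (hG'sub he))
      (lt_of_le_of_lt (maxDens_mono hG'sub) hm)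
    -- dangerous edge sets
    set S : Fin k → HG := fun i =>
      G.filter (fun e => v ∈ e ∧ ∀ u ∈ e, u ≠ v → c u = i) with hS
    have hdisj : ∀ i j : Fin k, i ≠ j → Disjoint (S i) (S j) := by
      intro i j hij
      rw [Finset.disjoint_left]
      intro e hei hej
      simp only [hS, Finset.mem_filter] at hei hej
      obtain ⟨u, hu', hune⟩ := Finset.exists_mem_ne
        (by rw [hu e hei.1]; omega) v
      exact hij ((hei.2.2 u hu' hune).symm.trans (hej.2.2 u hu' hune))
    have hsumS : ∑ i : Fin k, (S i).card < k * d := by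
      have hb : (Finset.univ.biUnion S).card = ∑ i : Fin k, (S i).card :=
        Finset.card_biUnion (fun i _ j _ hij => hdisj i j hij)
      have hsub : Finset.univ.biUnion S ⊆ G.filter (fun e => v ∈ e) := by
        intro e he
        obtain ⟨i, _, hei⟩ := Finset.mem_biUnion.1 he
        simp only [hS, Finset.mem_filter] at hei
        exact Finset.mem_filter.2 ⟨hei.1, hei.2.1⟩
      calc ∑ i : Fin k, (S i).card = (Finset.univ.biUnion S).card := hb.symm
        _ ≤ (G.filter (fun e => v ∈ e)).card := Finset.card_le_card hsub
        _ = deg G v := rfl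
        _ < k * d := hvdeg
    have hpig : ∃ i₀ : Fin k, (S i₀).card < d := by
      by_contra hcon
      push_neg at hcon
      have : k * d ≤ ∑ i : Fin k, (S i).card := by
        calc k * d = ∑ _i : Fin k, d := by
              rw [Finset.sum_const, Finset.card_univ, Fintype.card_fin, smul_eq_mul]
          _ ≤ ∑ i : Fin k, (S i).card := Finset.sum_le_sum (fun i _ => hcon i)
      omega
    obtain ⟨i₀, hi₀⟩ := hpig
    refine ⟨Function.update c v i₀, fun i => ?_⟩
    set c' := Function.update c v i₀ with hc'
    rw [maxMinDeg]
    rw [Finset.sup_lt_iff (by exact_mod_cast hd : (⊥ : ℕ) < d)]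
    intro J hJ
    rw [Finset.mem_powerset] at hJ
    by_cases hvJ : (vset J).Nonempty
    case neg => rw [minDeg, dif_neg hvJ]; omega
    case pos =>
    rw [minDeg, dif_pos hvJ]
    by_cases hvin : v ∈ vset J
    · -- the colour must be i₀, and deg J v < d
      obtain ⟨e, heJ, hve⟩ := mem_vset.1 hvin
      have heG := hJ heJ
      rw [Finset.mem_filter] at heG
      have hii : i = i₀ := by
        have := heG.2 v hve
        rw [hc', Function.update_self] at this
        exact this.symm
      have hdeg : deg J v < d := by
        refine lt_of_le_of_lt (Finset.card_le_card ?_) hi₀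
        intro e' he'
        rw [Finset.mem_filter] at he'
        have he'G := hJ he'.1
        rw [Finset.mem_filter] at he'G
        refine Finset.mem_filter.2 ⟨he'G.1, he'.2, fun u hu' hune => ?_⟩
        have := he'G.2 u hu'
        rw [hc', Function.update_of_ne hune] at this
        rw [this, hii]
      exact lt_of_le_of_lt (Finset.inf'_le _ hvin) hdeg
    · -- J lives in G', use induction hypothesis
      have hJG' : J ⊆ G'.filter (fun e => ∀ u ∈ e, c u = i) := by
        intro e heJ
        have heG := hJ heJ
        rw [Finset.mem_filter] at heG
        have hve : v ∉ e := fun hve => hvin (mem_vset.2 ⟨e, heJ, hve⟩)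
        refine Finset.mem_filter.2 ⟨Finset.mem_filter.2 ⟨heG.1, hve⟩, fun u hu' => ?_⟩
        have := heG.2 u hu'
        rwa [hc', Function.update_of_ne (fun h => hve (by rw [← h]; exact hu'))] at this
      have h1 : minDeg J ≤ maxMinDeg (G'.filter (fun e => ∀ u ∈ e, c u = i)) :=
        Finset.le_sup (Finset.mem_powerset.2 hJG')
      have h2 : minDeg J = (vset J).inf' hvJ (deg J) := by rw [minDeg, dif_pos hvJ]
      rw [← h2]
      exact lt_of_le_of_lt h1 (hc i)
/-- Every `k`-uniform hypergraph `G` with `m(G) < d` (for an integer `d ≥ 1`)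
admits a vertex `k`-colouring in which no colour class induces a
subhypergraph of minimum degree at least `d`; in particular, if
`m(G) < δ_max(H)` then `G` has a vertex `k`-colouring with no monochromatic
copy of `H`. -/
theorem vertex_colouring_low_degree (k : ℕ) (hk : 2 ≤ k) :
    (∀ G : HG, IsUniform k G → ∀ d : ℕ, 1 ≤ d → maxDens G < (d : ℝ) →
      ∃ c : ℕ → Fin k, ∀ i : Fin k,
        maxMinDeg (G.filter (fun e => ∀ v ∈ e, c v = i)) < d) ∧
    (∀ G H : HG, IsUniform k G → IsUniform k H →
      maxDens G < (maxMinDeg H : ℝ) →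
      ∃ c : ℕ → Fin k,
        ¬ ∃ K : HG, IsCopy H K ∧ K ⊆ G ∧ ∃ i : Fin k, ∀ v ∈ vset K, c v = i) := by
  have part1 : ∀ G : HG, IsUniform k G → ∀ d : ℕ, 1 ≤ d → maxDens G < (d : ℝ) →
      ∃ c : ℕ → Fin k, ∀ i : Fin k,
        maxMinDeg (G.filter (fun e => ∀ v ∈ e, c v = i)) < d := by
    intro G hu d hd hm
    exact key_lemma k d hk hd G.card G le_rfl hu hm
  refine ⟨part1, ?_⟩
  intro G H huG huH hm
  set d : ℕ := maxMinDeg H with hdd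
  have hd : 1 ≤ d := by
    by_contra h
    have : d = 0 := by omega
    rw [this] at hm
    have := maxDens_nonneg G
    simp at hm
    linarith
  obtain ⟨c, hc⟩ := part1 G huG d hd hm
  refine ⟨c, ?_⟩
  rintro ⟨K, ⟨f, hfinj, hKim⟩, hKG, i, hmono⟩
  -- find subhypergraph H' of H with minDeg H' = d
  obtain ⟨H', hH'mem, hH'eq⟩ := Finset.exists_mem_eq_sup H.powerset
    ⟨∅, Finset.empty_mem_powerset H⟩ minDeg
  rw [Finset.mem_powerset] at hH'mem
  replace hH'eq : d = minDeg H' := by rw [hdd, HG.maxMinDeg]; exact hH'eq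
  have hvH'sub : vset H' ⊆ vset H := vset_mono hH'mem
  have hvH'ne : (vset H').Nonempty := by
    by_contra h
    rw [Finset.not_nonempty_iff_eq_empty] at h
    have : minDeg H' = 0 := by rw [minDeg, dif_neg (by rw [h]; exact Finset.not_nonempty_empty)]
    omega
  -- the image of H'
  set K' : HG := H'.image (fun e => e.image f) with hK'
  have hK'K : K' ⊆ K := by
    rw [hKim]; exact Finset.image_subset_image hH'mem
  have hedge_sub : ∀ e ∈ H', e ⊆ vset H' := fun e he u hu => mem_vset.2 ⟨e, he, hu⟩
  -- injectivity of edge map on H'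
  have hinj_edge : ∀ e ∈ H', ∀ e' ∈ H', e.image f = e'.image f → e = e' := by
    intro e he e' he' heq
    have key : ∀ a ∈ H', ∀ b ∈ H', a.image f = b.image f → a ⊆ b := by
      intro a ha b hb hab x hx
      have : f x ∈ b.image f := by rw [← hab]; exact Finset.mem_image_of_mem f hx
      obtain ⟨y, hy, hxy⟩ := Finset.mem_image.1 this
      have hxe : x ∈ vset H := hvH'sub (hedge_sub a ha hx)
      have hye : y ∈ vset H := hvH'sub (hedge_sub b hb hy)
      rwa [← hfinj hye hxe hxy]
    exact Finset.Subset.antisymm (key e he e' he' heq) (key e' he' e he heq.symm)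
  -- vertex set of K'
  have hvK' : ∀ w, w ∈ vset K' ↔ ∃ u ∈ vset H', f u = w := by
    intro w
    constructor
    · intro hw
      obtain ⟨e, he, hwe⟩ := mem_vset.1 hw
      obtain ⟨e₀, he₀, rfl⟩ := Finset.mem_image.1 he
      obtain ⟨u, hu, hfu⟩ := Finset.mem_image.1 hwe
      exact ⟨u, hedge_sub e₀ he₀ hu, hfu⟩
    · rintro ⟨u, hu, rfl⟩
      obtain ⟨e, he, hue⟩ := mem_vset.1 hu
      exact mem_vset.2 ⟨e.image f, Finset.mem_image_of_mem _ he, Finset.mem_image_of_mem f hue⟩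
  -- degrees do not decrease
  have hdeg : ∀ u ∈ vset H', deg H' u ≤ deg K' (f u) := by
    intro u hu
    rw [deg, deg]
    refine Finset.card_le_card_of_injOn (fun e => e.image f) ?_ ?_
    · intro e he
      rw [Finset.mem_coe, Finset.mem_filter] at he
      exact Finset.mem_filter.2 ⟨Finset.mem_image_of_mem _ he.1,
        Finset.mem_image_of_mem f he.2⟩
    · intro e he e' he' heq
      rw [Finset.mem_coe, Finset.mem_filter] at he he'
      exact hinj_edge e he.1 e' he'.1 heq
  -- min degree of K' is at least d
  have hvK'ne : (vset K').Nonempty := by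
    obtain ⟨u, hu⟩ := hvH'ne
    exact ⟨f u, (hvK' (f u)).2 ⟨u, hu, rfl⟩⟩
  have hminK' : d ≤ minDeg K' := by
    rw [minDeg, dif_pos hvK'ne]
    refine Finset.le_inf' hvK'ne _ (fun w hw => ?_)
    obtain ⟨u, hu, rfl⟩ := (hvK' w).1 hw
    have h1 : minDeg H' ≤ deg H' u := by
      rw [minDeg, dif_pos hvH'ne]
      exact Finset.inf'_le _ hu
    calc d = minDeg H' := hH'eq
      _ ≤ deg H' u := h1
      _ ≤ deg K' (f u) := hdeg u hu
  -- K' sits inside the monochromatic part of G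
  have hK'G : K' ⊆ G.filter (fun e => ∀ v ∈ e, c v = i) := by
    intro e he
    have heK : e ∈ K := hK'K he
    refine Finset.mem_filter.2 ⟨hKG heK, fun v hv => hmono v (mem_vset.2 ⟨e, heK, hv⟩)⟩
  have : minDeg K' ≤ maxMinDeg (G.filter (fun e => ∀ v ∈ e, c v = i)) :=
    Finset.le_sup (Finset.mem_powerset.2 hK'G)
  have := hc i
  omega
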